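/- arXiv:1811.01456 — 4 statements merged into one kernel-verified Lean document; each statement's English description precedes it below -/
import Mathlib

section
/- Let L be a sublattice of the lattice of superequivalences on a set S. If the elements of L permute pairwise (ℐ ∘ ℐ' = ℐ' ∘ ℐ for all ℐ, ℐ' ∈ L), then L is a modular lattice. -/
open Set

variable {α : Type*}

/-- An ideal in the lattice of binary relations on a set: nonempty, downward
closed, and closed under finite unions (= finite joins). -/
def IsIdeal (ℐ : Set (Set (α × α))) : Prop :=
  ℐ.Nonempty ∧ (∀ R ∈ ℐ, ∀ T ⊆ R, T ∈ ℐ) ∧ (∀ R ∈ ℐ, ∀ S ∈ ℐ, R ∪ S ∈ ℐ)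

/-- A superequivalence: an ideal of relations containing the diagonal, closed
under relational opposites, and closed under composition of relations. -/
def IsSuperEq (ℐ : Set (Set (α × α))) : Prop :=
  IsIdeal ℐ ∧ SetRel.id ∈ ℐ ∧ (∀ R ∈ ℐ, Prod.swap ⁻¹' R ∈ ℐ) ∧
    (∀ R ∈ ℐ, ∀ S ∈ ℐ, SetRel.comp R S ∈ ℐ)

/-- Composition of ideals of relations: the ideal generated by the compositions
`R ○ S` of members (this generating family is directed, so the generated ideal
is its downward closure). -/
def idealComp (ℐ 𝒥 : Set (Set (α × α))) : Set (Set (α × α)) :=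
  {T | ∃ R ∈ ℐ, ∃ S ∈ 𝒥, T ⊆ SetRel.comp R S}

/-- Composition of a nonempty list of relations. -/
def listComp : List (Set (α × α)) → Set (α × α)
  | [] => SetRel.id
  | [R] => R
  | R :: S :: l => SetRel.comp R (listComp (S :: l))

/-- The ideal of relations generated by a set `G` of relations: everything
below a finite union of members of `G`. -/
def idealGen (G : Set (Set (α × α))) : Set (Set (α × α)) :=
  {T | ∃ s : Finset (Set (α × α)), ↑s ⊆ G ∧ T ⊆ ⋃₀ ↑s}

/-- The set of finite (nonempty) compositions of relations from `X`. -/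
def comps (X : Set (Set (α × α))) : Set (Set (α × α)) :=
  {T | ∃ l : List (Set (α × α)), l ≠ [] ∧ (∀ R ∈ l, R ∈ X) ∧ T = listComp l}

/-- The join of two superequivalences: the ideal generated by all finite
compositions of relations from their union. -/
def seJoin (ℐ 𝒥 : Set (Set (α × α))) : Set (Set (α × α)) :=
  idealGen (comps (ℐ ∪ 𝒥))

/-- The join of a family of superequivalences. -/
def seSup (S : Set (Set (Set (α × α)))) : Set (Set (α × α)) :=
  idealGen (comps (⋃₀ S))

/-
If `ℐ ∘ 𝒥 = 𝒥 ∘ ℐ`, then `ℐ ∘ 𝒥` is closed under opposites, since `(R ∘ S)ᵒᵖ = Sᵒᵖ ∘ Rᵒᵖ`, and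
under composition, since the middle factor of `R ∘ S ∘ R' ∘ S'` can be rewritten from `𝒥 ∘ ℐ`
into `ℐ ∘ 𝒥`; so `ℐ ∘ 𝒥` is the join of `ℐ` and `𝒥`. The modular law `x ∨ (y ∧ z) = (x ∨ y) ∧ z`
for `x ≤ z` then reduces to the modular law of relations: if `T ⊆ R ∘ S`, then
`T ⊆ R ∘ (S ∩ (R⁻¹ ∘ T))`, and for `R ∈ x ⊆ z`, `S ∈ y` and `T ∈ z` the relation `S ∩ (R⁻¹ ∘ T)`
lies in `y ∩ z`.
-/

open SetRel

section Superequivalences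

variable {ℐ 𝒥 𝒦 : Set (Set (α × α))} {R S T : SetRel α α}

namespace IsIdeal

lemma mem_of_subset (h : IsIdeal ℐ) (hR : R ∈ ℐ) (hT : T ⊆ R) : T ∈ ℐ :=
  h.2.1 R hR T hT

lemma union_mem (h : IsIdeal ℐ) (hR : R ∈ ℐ) (hS : S ∈ ℐ) : R ∪ S ∈ ℐ :=
  h.2.2 R hR S hS

lemma empty_mem (h : IsIdeal ℐ) : (∅ : Set (α × α)) ∈ ℐ :=
  h.1.elim fun _ hR => h.mem_of_subset hR (empty_subset _)

lemma sUnion_mem (h : IsIdeal ℐ) (s : Finset (Set (α × α))) (hs : ↑s ⊆ ℐ) : ⋃₀ ↑s ∈ ℐ := by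
  classical
  induction s using Finset.induction with
  | empty => simpa using h.empty_mem
  | insert R s _ ih =>
    rw [Finset.coe_insert, sUnion_insert]
    rw [Finset.coe_insert, insert_subset_iff] at hs
    exact h.union_mem hs.1 (ih hs.2)

end IsIdeal

namespace IsSuperEq

lemma id_mem (h : IsSuperEq ℐ) : SetRel.id ∈ ℐ := h.2.1

lemma inv_mem (h : IsSuperEq ℐ) (hR : R ∈ ℐ) : R.inv ∈ ℐ := h.2.2.1 R hR

lemma comp_mem (h : IsSuperEq ℐ) (hR : R ∈ ℐ) (hS : S ∈ ℐ) : R ○ S ∈ ℐ := h.2.2.2 R hR S hS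

lemma listComp_mem (h : IsSuperEq ℐ) :
    ∀ l : List (Set (α × α)), l ≠ [] → (∀ R ∈ l, R ∈ ℐ) → listComp l ∈ ℐ
  | [], hl, _ => absurd rfl hl
  | [R], _, hmem => hmem R (List.mem_singleton_self R)
  | R :: S :: l, _, hmem =>
    h.comp_mem (hmem R List.mem_cons_self)
      (h.listComp_mem (S :: l) (List.cons_ne_nil S l) fun T hT =>
        hmem T (List.mem_cons_of_mem R hT))

lemma seJoin_subset (h : IsSuperEq 𝒦) (hI : ℐ ⊆ 𝒦) (hJ : 𝒥 ⊆ 𝒦) : seJoin ℐ 𝒥 ⊆ 𝒦 := by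
  rintro T ⟨s, hs, hTs⟩
  refine h.1.mem_of_subset (h.1.sUnion_mem s fun U hU => ?_) hTs
  obtain ⟨l, hl, hlmem, rfl⟩ := hs hU
  exact h.listComp_mem l hl fun R hR => (hlmem R hR).elim (@hI R) (@hJ R)

end IsSuperEq

lemma seJoin_mono_right {𝒥' : Set (Set (α × α))} (h : 𝒥 ⊆ 𝒥') : seJoin ℐ 𝒥 ⊆ seJoin ℐ 𝒥' := by
  rintro T ⟨s, hs, hTs⟩
  refine ⟨s, fun U hU => ?_, hTs⟩
  obtain ⟨l, hl, hlmem, rfl⟩ := hs hU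
  exact ⟨l, hl, fun R hR => (hlmem R hR).imp id (@h R), rfl⟩

lemma idealComp_subset_seJoin : idealComp ℐ 𝒥 ⊆ seJoin ℐ 𝒥 := by
  rintro T ⟨R, hR, S, hS, hT⟩
  refine ⟨{R ○ S}, ?_, by simpa using hT⟩
  rw [Finset.coe_singleton, singleton_subset_iff]
  refine ⟨[R, S], List.cons_ne_nil _ _, fun X hX => ?_, rfl⟩
  rcases List.mem_pair.1 hX with rfl | rfl
  exacts [Or.inl hR, Or.inr hS]

lemma subset_idealComp_left (hJ : SetRel.id ∈ 𝒥) : ℐ ⊆ idealComp ℐ 𝒥 :=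
  fun R hR => ⟨R, hR, SetRel.id, hJ, (comp_id R).ge⟩

lemma subset_idealComp_right (hI : SetRel.id ∈ ℐ) : 𝒥 ⊆ idealComp ℐ 𝒥 :=
  fun S hS => ⟨SetRel.id, hI, S, hS, (id_comp S).ge⟩

lemma isSuperEq_idealComp (hI : IsSuperEq ℐ) (hJ : IsSuperEq 𝒥)
    (hperm : idealComp ℐ 𝒥 = idealComp 𝒥 ℐ) : IsSuperEq (idealComp ℐ 𝒥) := by
  refine ⟨⟨⟨∅, SetRel.id, hI.id_mem, SetRel.id, hJ.id_mem, empty_subset _⟩, ?down, ?union⟩,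
    subset_idealComp_left hJ.id_mem hI.id_mem, ?inv, ?comp⟩
  case down =>
    rintro U ⟨R, hR, S, hS, hU⟩ T hT
    exact ⟨R, hR, S, hS, hT.trans hU⟩
  case union =>
    rintro T ⟨R, hR, S, hS, hT⟩ T' ⟨R', hR', S', hS', hT'⟩
    exact ⟨R ∪ R', hI.1.union_mem hR hR', S ∪ S', hJ.1.union_mem hS hS',
      union_subset (hT.trans (comp_subset_comp subset_union_left subset_union_left))
        (hT'.trans (comp_subset_comp subset_union_right subset_union_right))⟩
  case inv =>
    rintro T ⟨R, hR, S, hS, hT⟩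
    rw [hperm]
    exact ⟨SetRel.inv S, hJ.inv_mem hS, SetRel.inv R, hI.inv_mem hR,
      (Set.preimage_mono hT).trans (inv_comp R S).le⟩
  case comp =>
    rintro T ⟨R, hR, S, hS, hT⟩ T' ⟨R', hR', S', hS', hT'⟩
    obtain ⟨A, hA, B, hB, hAB⟩ : S ○ R' ∈ idealComp ℐ 𝒥 := hperm ▸ ⟨S, hS, R', hR', le_rfl⟩
    refine ⟨R ○ A, hI.comp_mem hR hA, B ○ S', hJ.comp_mem hB hS', ?_⟩
    calc T ○ T' ⊆ (R ○ S) ○ (R' ○ S') := comp_subset_comp hT hT'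
      _ = R ○ ((S ○ R') ○ S') := by simp only [comp_assoc]
      _ ⊆ R ○ ((A ○ B) ○ S') := comp_subset_comp_right (comp_subset_comp_left hAB)
      _ = (R ○ A) ○ (B ○ S') := by simp only [comp_assoc]

lemma seJoin_eq_idealComp (hI : IsSuperEq ℐ) (hJ : IsSuperEq 𝒥)
    (hperm : idealComp ℐ 𝒥 = idealComp 𝒥 ℐ) : seJoin ℐ 𝒥 = idealComp ℐ 𝒥 :=
  (isSuperEq_idealComp hI hJ hperm).seJoin_subset (subset_idealComp_left hJ.id_mem)
    (subset_idealComp_right hI.id_mem) |>.antisymm idealComp_subset_seJoin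

end Superequivalences

lemma SetRel.subset_comp_inter_inv_comp {β γ : Type*} {R : SetRel α β} {S : SetRel β γ}
    {T : SetRel α γ} (h : T ⊆ R ○ S) : T ⊆ R ○ (S ∩ (R.inv ○ T)) := by
  rintro ⟨a, c⟩ hac
  obtain ⟨b, hab, hbc⟩ := h hac
  exact ⟨b, hab, hbc, a, hab, hac⟩

lemma idealComp_inter_subset {x y z : Set (Set (α × α))} (hy : IsIdeal y) (hz : IsSuperEq z)
    (hxz : x ⊆ z) : idealComp x y ∩ z ⊆ idealComp x (y ∩ z) := by
  rintro T ⟨⟨R, hR, S, hS, hT⟩, hTz⟩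
  exact ⟨R, hR, S ∩ (SetRel.inv R ○ T),
    ⟨hy.mem_of_subset hS inter_subset_left,
      hz.1.mem_of_subset (hz.comp_mem (hz.inv_mem (hxz hR)) hTz) inter_subset_right⟩,
    subset_comp_inter_inv_comp hT⟩

theorem stmt7_general (L : Set (Set (Set (α × α))))
    (hL : ∀ ℐ ∈ L, IsSuperEq ℐ)
    (hperm : ∀ ℐ ∈ L, ∀ 𝒥 ∈ L, idealComp ℐ 𝒥 = idealComp 𝒥 ℐ) :
    ∀ x ∈ L, ∀ y ∈ L, ∀ z ∈ L, x ⊆ z → seJoin x (y ∩ z) = seJoin x y ∩ z := by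
  intro x hx y hy z hz hxz
  refine Subset.antisymm (fun T hT => ⟨seJoin_mono_right inter_subset_left hT,
    (hL z hz).seJoin_subset hxz inter_subset_right hT⟩) ?_
  rw [seJoin_eq_idealComp (hL x hx) (hL y hy) (hperm x hx y hy)]
  exact (idealComp_inter_subset (hL y hy).1 (hL z hz) hxz).trans idealComp_subset_seJoin

theorem stmt7 (L : Set (Set (Set (α × α))))
    (hL : ∀ ℐ ∈ L, IsSuperEq ℐ)
    (hmeet : ∀ ℐ ∈ L, ∀ 𝒥 ∈ L, ℐ ∩ 𝒥 ∈ L)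
    (hjoin : ∀ ℐ ∈ L, ∀ 𝒥 ∈ L, seJoin ℐ 𝒥 ∈ L)
    (hperm : ∀ ℐ ∈ L, ∀ 𝒥 ∈ L, idealComp ℐ 𝒥 = idealComp 𝒥 ℐ) :
    ∀ x ∈ L, ∀ y ∈ L, ∀ z ∈ L, x ⊆ z → seJoin x (y ∩ z) = seJoin x y ∩ z :=
  stmt7_general L hL hperm
end

section
/- If π : A → B is a surjective function and (ℐᵢ)_{i∈I} is a family of superequivalences on B, then the inverse image of the join equals the join of the inverse images: π⁻¹(⋁ᵢ ℐᵢ) = ⋁ᵢ π⁻¹(ℐᵢ). -/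
/-!
The ideal generated by `G` is the least ideal containing `G`, and `R ↦ π⁻¹(R)` preserves
inclusions and unions, so `π⁻¹(idealGen G) = idealGen (π⁻¹ '' G)`. For surjective `π` we have
`π⁻¹(R ○ S) = π⁻¹(R) ○ π⁻¹(S)`, so the preimages of finite compositions of members of `G` are
exactly the finite compositions of preimages. Finally `π⁻¹(ℐᵢ)` is only the downward closure of
`π⁻¹ '' ℐᵢ`, but enlarging generators within their downward closure does not change the ideal
generated by their compositions.
-/
open Set

variable {α : Type*}

/-- Preimage of a relation along a function. -/
def relPre {A B : Type*} (f : A → B) (R : Set (B × B)) : Set (A × A) :=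
  {p | (f p.1, f p.2) ∈ R}

/-- Inverse image of an ideal of relations along a function: the ideal
generated by the preimages of its members (a directed family, so the
generated ideal is the downward closure). -/
def invIm {A B : Type*} (f : A → B) (ℐ : Set (Set (B × B))) : Set (Set (A × A)) :=
  {T | ∃ R ∈ ℐ, T ⊆ relPre f R}

theorem IsIdeal.empty_mem_s8 {ℐ : Set (Set (α × α))} (hℐ : IsIdeal ℐ) : ∅ ∈ ℐ := by
  obtain ⟨⟨R, hR⟩, hdown, -⟩ := hℐ
  exact hdown R hR ∅ (empty_subset R)

theorem IsIdeal.sUnion_finset_mem {ℐ : Set (Set (α × α))} (hℐ : IsIdeal ℐ)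
    [DecidableEq (Set (α × α))] (s : Finset (Set (α × α))) (hs : ↑s ⊆ ℐ) : ⋃₀ ↑s ∈ ℐ := by
  induction s using Finset.induction_on with
  | empty => simpa using hℐ.empty_mem_s8
  | insert R s _ ih =>
    rw [Finset.coe_insert, sUnion_insert]
    exact hℐ.2.2 R (hs (by simp)) _ (ih (fun T hT => hs (by simp [Finset.mem_coe.1 hT])))

theorem subset_idealGen (G : Set (Set (α × α))) : G ⊆ idealGen G :=
  fun R hR => ⟨{R}, by simpa using hR, by simp⟩

theorem isIdeal_idealGen (G : Set (Set (α × α))) : IsIdeal (idealGen G) := by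
  classical
  refine ⟨⟨∅, ∅, by simp, empty_subset _⟩, ?_, ?_⟩
  · rintro R ⟨s, hsG, hRs⟩ T hTR
    exact ⟨s, hsG, hTR.trans hRs⟩
  · rintro R ⟨s, hsG, hRs⟩ S ⟨t, htG, hSt⟩
    refine ⟨s ∪ t, by simpa using And.intro hsG htG, ?_⟩
    rw [Finset.coe_union, sUnion_union]
    exact union_subset_union hRs hSt

theorem idealGen_subset {G ℐ : Set (Set (α × α))} (hℐ : IsIdeal ℐ) (hG : G ⊆ ℐ) :
    idealGen G ⊆ ℐ := by
  classical
  rintro T ⟨s, hsG, hTs⟩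
  exact hℐ.2.1 _ (hℐ.sUnion_finset_mem s (hsG.trans hG)) T hTs

theorem idealGen_subset_idealGen {X Y : Set (Set (α × α))}
    (hXY : ∀ T ∈ X, ∃ U ∈ Y, T ⊆ U) : idealGen X ⊆ idealGen Y := by
  refine idealGen_subset (isIdeal_idealGen Y) fun T hT => ?_
  obtain ⟨U, hUY, hTU⟩ := hXY T hT
  exact (isIdeal_idealGen Y).2.1 U (subset_idealGen Y hUY) T hTU

section Compositions

variable {X Y : Set (Set (α × α))}

theorem mem_comps_of_mem {R : Set (α × α)} (hR : R ∈ X) : R ∈ comps X :=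
  ⟨[R], by simp, by simpa using hR, rfl⟩

theorem comp_mem_comps {R S : Set (α × α)} (hR : R ∈ X) (hS : S ∈ comps X) :
    SetRel.comp R S ∈ comps X := by
  obtain ⟨l, hl, hlX, rfl⟩ := hS
  obtain ⟨S, l, rfl⟩ := List.exists_cons_of_ne_nil hl
  refine ⟨R :: S :: l, by simp, ?_, rfl⟩
  exact List.forall_mem_cons.2 ⟨hR, hlX⟩

theorem comps_induction {P : Set (α × α) → Prop} (mem : ∀ R ∈ X, P R)
    (comp : ∀ R ∈ X, ∀ S ∈ comps X, P S → P (SetRel.comp R S)) : ∀ T ∈ comps X, P T := by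
  rintro T ⟨l, hl, hlX, rfl⟩
  induction l with
  | nil => exact absurd rfl hl
  | cons R l ih =>
    rcases l with _ | ⟨S, l⟩
    · exact mem R (hlX R (by simp))
    · have hSl : ∀ T ∈ S :: l, T ∈ X := fun T hT => hlX T (List.mem_cons_of_mem R hT)
      exact comp R (hlX R (by simp)) _ ⟨S :: l, by simp, hSl, rfl⟩ (ih (by simp) hSl)

theorem exists_comps_subset (hXY : ∀ T ∈ X, ∃ U ∈ Y, T ⊆ U) :
    ∀ T ∈ comps X, ∃ U ∈ comps Y, T ⊆ U := by
  refine comps_induction (fun R hR => ?_) fun R hR S _ ⟨V, hV, hSV⟩ => ?_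
  · obtain ⟨U, hU, hRU⟩ := hXY R hR
    exact ⟨U, mem_comps_of_mem hU, hRU⟩
  · obtain ⟨U, hU, hRU⟩ := hXY R hR
    exact ⟨SetRel.comp U V, comp_mem_comps hU hV, SetRel.comp_subset_comp hRU hSV⟩

theorem idealGen_comps_subset (hXY : ∀ T ∈ X, ∃ U ∈ Y, T ⊆ U) :
    idealGen (comps X) ⊆ idealGen (comps Y) :=
  idealGen_subset_idealGen (exists_comps_subset hXY)

end Compositions

section Preimages

variable {A B : Type*} {f : A → B}

theorem relPre_mono {R S : Set (B × B)} (h : R ⊆ S) : relPre f R ⊆ relPre f S :=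
  fun _ hp => h hp

theorem relPre_union (R S : Set (B × B)) : relPre f (R ∪ S) = relPre f R ∪ relPre f S := rfl

theorem relPre_comp (hf : Function.Surjective f) (R S : Set (B × B)) :
    relPre f (SetRel.comp R S) = SetRel.comp (relPre f R) (relPre f S) := by
  ext ⟨a, a'⟩
  constructor
  · rintro ⟨b, hb, hb'⟩
    obtain ⟨c, rfl⟩ := hf b
    exact ⟨c, hb, hb'⟩
  · rintro ⟨c, hc, hc'⟩
    exact ⟨f c, hc, hc'⟩

theorem IsIdeal.comap_relPre {ℐ : Set (Set (A × A))} (hℐ : IsIdeal ℐ) :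
    IsIdeal {R : Set (B × B) | relPre f R ∈ ℐ} :=
  ⟨⟨∅, hℐ.empty_mem_s8⟩, fun R hR T hTR => hℐ.2.1 _ hR _ (relPre_mono hTR),
    fun R hR S hS => by simpa only [mem_ofPred_eq, relPre_union] using hℐ.2.2 _ hR _ hS⟩

theorem isIdeal_invIm {ℐ : Set (Set (B × B))} (hℐ : IsIdeal ℐ) : IsIdeal (invIm f ℐ) := by
  refine ⟨⟨∅, ∅, hℐ.empty_mem_s8, empty_subset _⟩, ?_, ?_⟩
  · rintro R ⟨R', hR', hRR'⟩ T hTR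
    exact ⟨R', hR', hTR.trans hRR'⟩
  · rintro R ⟨R', hR', hRR'⟩ S ⟨S', hS', hSS'⟩
    exact ⟨R' ∪ S', hℐ.2.2 _ hR' _ hS', union_subset_union hRR' hSS'⟩

theorem invIm_idealGen (G : Set (Set (B × B))) :
    invIm f (idealGen G) = idealGen (relPre f '' G) := by
  have hℐ := isIdeal_idealGen (relPre f '' G)
  apply subset_antisymm
  · have hG : G ⊆ {R | relPre f R ∈ idealGen (relPre f '' G)} :=
      fun R hR => subset_idealGen _ (mem_image_of_mem _ hR)
    rintro T ⟨R, hR, hTR⟩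
    exact hℐ.2.1 _ (idealGen_subset hℐ.comap_relPre hG hR) T hTR
  · refine idealGen_subset (isIdeal_invIm (isIdeal_idealGen G)) ?_
    rintro _ ⟨R, hR, rfl⟩
    exact ⟨R, subset_idealGen G hR, subset_rfl⟩

theorem image_relPre_comps (hf : Function.Surjective f) (G : Set (Set (B × B))) :
    relPre f '' comps G = comps (relPre f '' G) := by
  apply subset_antisymm
  · rintro _ ⟨T, hT, rfl⟩
    refine comps_induction (P := fun T => relPre f T ∈ comps (relPre f '' G))
      (fun R hR => mem_comps_of_mem (mem_image_of_mem _ hR)) (fun R hR S _ hS => ?_) T hT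
    rw [relPre_comp hf]
    exact comp_mem_comps (mem_image_of_mem _ hR) hS
  · refine comps_induction (fun R hR => image_mono (fun _ => mem_comps_of_mem) hR) ?_
    rintro _ ⟨R, hR, rfl⟩ _ - ⟨S, hS, rfl⟩
    exact ⟨SetRel.comp R S, comp_mem_comps hR hS, relPre_comp hf R S⟩

theorem idealGen_comps_invIm (G : Set (Set (B × B))) :
    idealGen (comps (invIm f G)) = idealGen (comps (relPre f '' G)) := by
  apply subset_antisymm
  · exact idealGen_comps_subset fun T ⟨R, hR, hTR⟩ => ⟨relPre f R, mem_image_of_mem _ hR, hTR⟩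
  · refine idealGen_comps_subset ?_
    rintro _ ⟨R, hR, rfl⟩
    exact ⟨relPre f R, ⟨R, hR, subset_rfl⟩, subset_rfl⟩

theorem sUnion_range_invIm {I : Type*} (ℐ : I → Set (Set (B × B))) :
    ⋃₀ range (fun i => invIm f (ℐ i)) = invIm f (⋃₀ range ℐ) := by
  ext T
  simp only [sUnion_range, mem_iUnion, invIm, mem_ofPred_eq]
  constructor
  · rintro ⟨i, R, hR, hTR⟩
    exact ⟨R, ⟨i, hR⟩, hTR⟩
  · rintro ⟨R, ⟨i, hR⟩, hTR⟩
    exact ⟨i, R, hR, hTR⟩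

end Preimages

theorem stmt8_general {A B : Type*} {I : Type*} (π : A → B) (hπ : Function.Surjective π)
    (ℐ : I → Set (Set (B × B))) :
    invIm π (seSup (Set.range ℐ)) = seSup (Set.range fun i => invIm π (ℐ i)) := by
  rw [seSup, seSup, sUnion_range_invIm, idealGen_comps_invIm, ← image_relPre_comps hπ,
    invIm_idealGen]

theorem stmt8 {A B : Type*} {I : Type*} (π : A → B) (hπ : Function.Surjective π)
    (ℐ : I → Set (Set (B × B))) (h : ∀ i, IsSuperEq (ℐ i)) :
    invIm π (seSup (Set.range ℐ)) = seSup (Set.range fun i => invIm π (ℐ i)) :=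
  stmt8_general π hπ ℐ
end

section
/- (Shifting Lemma for superequivalences) Let A be an algebra in a congruence-modular variety with Day terms, let ℛ be a compatible ideal of relations on A containing the diagonal and closed under opposites, and let ℐ₁, ℐ₂ be compatible superequivalences on A with ℛ ∧ ℐ₁ ≤ ℐ₂ ≤ ℐ₁. Then (ℛ ∘ (ℐ₁ ∧ ℐ₂) ∘ ℛ) ∧ ℐ₁ ≤ ℐ₂. -/
open Set

variable {α : Type*}

variable {A : Type*} {ι : Type*} {ar : ι → ℕ}

/-- Terms over a signature (operation symbols `ι` with arities `ar`) in `n` variables. -/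
inductive Term (ι : Type*) (ar : ι → ℕ) (n : ℕ) : Type _ where
  | var : Fin n → Term ι ar n
  | app : (i : ι) → (Fin (ar i) → Term ι ar n) → Term ι ar n

/-- Evaluation of a term in an algebra `A` with operations `ops`. -/
def Term.eval {A : Type*} {ι : Type*} {ar : ι → ℕ} {n : ℕ}
    (ops : ∀ i, (Fin (ar i) → A) → A) (v : Fin n → A) : Term ι ar n → A
  | Term.var k => v k
  | Term.app i ts => ops i fun j => Term.eval ops v (ts j)

/-- Componentwise image of a tuple of relations under an `n`-ary operation. -/
def opImg {A : Type*} {n : ℕ} (w : (Fin n → A) → A) (R : Fin n → Set (A × A)) :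
    Set (A × A) :=
  {p | ∃ a b : Fin n → A, (∀ k, (a k, b k) ∈ R k) ∧ p = (w a, w b)}

/-- A set (ideal) of relations on the algebra `A` is compatible if it is closed
under componentwise images of the basic operations. -/
def seCompatible (ops : ∀ i, (Fin (ar i) → A) → A) (ℐ : Set (Set (A × A))) : Prop :=
  ∀ i, ∀ R : Fin (ar i) → Set (A × A), (∀ k, R k ∈ ℐ) → opImg (ops i) R ∈ ℐ

/-- `m 0, …, m d` is a sequence of Day terms for the algebra `(A, ops)`. -/
def DayTerms (ops : ∀ i, (Fin (ar i) → A) → A) (m : ℕ → Term ι ar 4) (d : ℕ) : Prop :=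
  (∀ i ≤ d, ∀ x y : A, (m i).eval ops ![x, y, y, x] = x) ∧
  (∀ x y z w : A, (m 0).eval ops ![x, y, z, w] = x) ∧
  (∀ x y z w : A, (m d).eval ops ![x, y, z, w] = w) ∧
  (∀ i < d, Even i → ∀ x y : A,
    (m i).eval ops ![x, x, y, y] = (m (i + 1)).eval ops ![x, x, y, y]) ∧
  (∀ i < d, Odd i → ∀ x y z : A,
    (m i).eval ops ![x, y, y, z] = (m (i + 1)).eval ops ![x, y, y, z])

/-!
Choose witnesses `x R₁ y S z R₂ w` for all pairs `(x, w)` of `T` at once, indexed by a parameter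
`q`, and work with the uniform relations `{(f q, g q)}` they generate: compatibility carries these
through terms. A Day-term chain then links `x` to `m_d(x,x,w,w) = w` inside `ℐ₂`. Even steps are
equalities `m_k(x,x,w,w) = m_{k+1}(x,x,w,w)`. An odd step goes
`m_k(x,x,w,w) — m_k(x,y,z,w) — m_{k+1}(x,y,z,w) — m_{k+1}(x,x,w,w)`: the outer links lie in `ℛ`,
and in `ℐ₁` through `m_k(x,x,x,x) = x = m_k(x,y,y,x)`, hence in `ℛ ∩ ℐ₁ ⊆ ℐ₂`; the middle link
passes through `m_k(x,y,y,w) = m_{k+1}(x,y,y,w)` and only uses `S ∈ ℐ₂`.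
-/

def pairRange {β : Type*} (f g : β → α) : Set (α × α) :=
  range fun b => (f b, g b)

lemma IsIdeal.isLowerSet {ℐ : Set (Set (α × α))} (h : IsIdeal ℐ) : IsLowerSet ℐ :=
  fun _ _ hle hmem => h.2.1 _ hmem _ hle

lemma IsSuperEq.isLowerSet {ℐ : Set (Set (α × α))} (h : IsSuperEq ℐ) : IsLowerSet ℐ :=
  h.1.isLowerSet

section pairRange

variable {β : Type*} {ℐ : Set (Set (α × α))} {f g h : β → α}

lemma pairRange_swap (f g : β → α) : Prod.swap ⁻¹' pairRange f g = pairRange g f := by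
  ext ⟨a, c⟩
  simp [pairRange, and_comm]

lemma pairRange_subset_comp (f g h : β → α) :
    pairRange f h ⊆ SetRel.comp (pairRange f g) (pairRange g h) := by
  rintro _ ⟨b, rfl⟩
  exact ⟨g b, ⟨b, rfl⟩, ⟨b, rfl⟩⟩

lemma pairRange_self_mem (hℐ : IsLowerSet ℐ) (hid : SetRel.id ∈ ℐ) (f : β → α) :
    pairRange f f ∈ ℐ :=
  hℐ (by rintro _ ⟨b, rfl⟩; rfl) hid

lemma pairRange_symm_mem (hsw : ∀ R ∈ ℐ, Prod.swap ⁻¹' R ∈ ℐ) (hfg : pairRange f g ∈ ℐ) :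
    pairRange g f ∈ ℐ :=
  pairRange_swap f g ▸ hsw _ hfg

lemma pairRange_trans_mem (hℐ : IsLowerSet ℐ) (hcomp : ∀ R ∈ ℐ, ∀ S ∈ ℐ, SetRel.comp R S ∈ ℐ)
    (hfg : pairRange f g ∈ ℐ) (hgh : pairRange g h ∈ ℐ) : pairRange f h ∈ ℐ :=
  hℐ (pairRange_subset_comp f g h) (hcomp _ hfg _ hgh)

namespace IsSuperEq

lemma pairRange_self_mem (hℐ : IsSuperEq ℐ) (f : β → α) : pairRange f f ∈ ℐ :=
  _root_.pairRange_self_mem hℐ.isLowerSet hℐ.2.1 f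

lemma pairRange_symm_mem (hℐ : IsSuperEq ℐ) (hfg : pairRange f g ∈ ℐ) : pairRange g f ∈ ℐ :=
  _root_.pairRange_symm_mem hℐ.2.2.1 hfg

lemma pairRange_trans_mem (hℐ : IsSuperEq ℐ) (hfg : pairRange f g ∈ ℐ)
    (hgh : pairRange g h ∈ ℐ) : pairRange f h ∈ ℐ :=
  _root_.pairRange_trans_mem hℐ.isLowerSet hℐ.2.2.2 hfg hgh

end IsSuperEq

end pairRange

section Terms

variable {β : Type*} {ops : ∀ i, (Fin (ar i) → A) → A} {ℐ : Set (Set (A × A))}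

lemma pairRange_eval_mem {n : ℕ} (hℐ : IsLowerSet ℐ) (hc : seCompatible ops ℐ)
    {a b : β → Fin n → A} (hab : ∀ k, pairRange (a · k) (b · k) ∈ ℐ) (t : Term ι ar n) :
    pairRange (fun q => t.eval ops (a q)) (fun q => t.eval ops (b q)) ∈ ℐ := by
  induction t with
  | var k => exact hab k
  | app i ts ih =>
    refine hℐ ?_ (hc i _ ih)
    rintro _ ⟨q, rfl⟩
    exact ⟨_, _, fun j => ⟨q, rfl⟩, rfl⟩

def Term.eval₄ (ops : ∀ i, (Fin (ar i) → A) → A) (t : Term ι ar 4) (x y z w : β → A) : β → A :=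
  fun q => t.eval ops ![x q, y q, z q, w q]

lemma pairRange_eval₄_mem (hℐ : IsLowerSet ℐ) (hc : seCompatible ops ℐ) (t : Term ι ar 4)
    {x y z w x' y' z' w' : β → A} (hx : pairRange x x' ∈ ℐ) (hy : pairRange y y' ∈ ℐ)
    (hz : pairRange z z' ∈ ℐ) (hw : pairRange w w' ∈ ℐ) :
    pairRange (t.eval₄ ops x y z w) (t.eval₄ ops x' y' z' w') ∈ ℐ :=
  pairRange_eval_mem hℐ hc (fun k => by fin_cases k <;> assumption) t

end Terms

section DayTerms

variable {β : Type*} {ops : ∀ i, (Fin (ar i) → A) → A} {ℐ : Set (Set (A × A))}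
  {t t' : Term ι ar 4} {x y z w : β → A}

lemma pairRange_eval₄_collapse_mem (hℐ : IsLowerSet ℐ) (hid : SetRel.id ∈ ℐ)
    (hsw : ∀ R ∈ ℐ, Prod.swap ⁻¹' R ∈ ℐ) (hc : seCompatible ops ℐ) (t : Term ι ar 4)
    (hxy : pairRange x y ∈ ℐ) (hzw : pairRange z w ∈ ℐ) :
    pairRange (t.eval₄ ops x x w w) (t.eval₄ ops x y z w) ∈ ℐ :=
  pairRange_eval₄_mem hℐ hc t (pairRange_self_mem hℐ hid x) hxy (pairRange_symm_mem hsw hzw)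
    (pairRange_self_mem hℐ hid w)

lemma pairRange_eval₄_collapse_mem_of_eval_abba (hℐ : IsSuperEq ℐ) (hc : seCompatible ops ℐ)
    (ht : ∀ a b : A, t.eval ops ![a, b, b, a] = a)
    (hyz : pairRange y z ∈ ℐ) (hxw : pairRange x w ∈ ℐ) :
    pairRange (t.eval₄ ops x x w w) (t.eval₄ ops x y z w) ∈ ℐ := by
  have hxxxx : t.eval₄ ops x x x x = x := funext fun _ => ht _ _
  have hxyyx : t.eval₄ ops x y y x = x := funext fun _ => ht _ _
  have hwx := hℐ.pairRange_symm_mem hxw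
  have hxxww_x := pairRange_eval₄_mem hℐ.isLowerSet hc t (hℐ.pairRange_self_mem x)
    (hℐ.pairRange_self_mem x) hwx hwx
  have hx_xyzw := pairRange_eval₄_mem hℐ.isLowerSet hc t (hℐ.pairRange_self_mem x)
    (hℐ.pairRange_self_mem y) hyz hxw
  rw [hxxxx] at hxxww_x
  rw [hxyyx] at hx_xyzw
  exact hℐ.pairRange_trans_mem hxxww_x hx_xyzw

lemma pairRange_eval₄_mem_of_eval_abbc_eq (hℐ : IsSuperEq ℐ) (hc : seCompatible ops ℐ)
    (htt' : ∀ a b c : A, t.eval ops ![a, b, b, c] = t'.eval ops ![a, b, b, c])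
    (hyz : pairRange y z ∈ ℐ) :
    pairRange (t.eval₄ ops x y z w) (t'.eval₄ ops x y z w) ∈ ℐ := by
  have hxyyw : t.eval₄ ops x y y w = t'.eval₄ ops x y y w := funext fun _ => htt' _ _ _
  have hx := hℐ.pairRange_self_mem x
  have hy := hℐ.pairRange_self_mem y
  have hw := hℐ.pairRange_self_mem w
  have hzy := hℐ.pairRange_symm_mem hyz
  have hdown := pairRange_eval₄_mem hℐ.isLowerSet hc t hx hy hzy hw
  have hup := pairRange_eval₄_mem hℐ.isLowerSet hc t' hx hy hyz hw
  rw [← hxyyw] at hup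
  exact hℐ.pairRange_trans_mem hdown hup

end DayTerms

section Shifting

variable {β : Type*} {ops : ∀ i, (Fin (ar i) → A) → A} {m : ℕ → Term ι ar 4} {d : ℕ}
  {ℛ ℐ₁ ℐ₂ : Set (Set (A × A))} {x y z w : β → A}

lemma DayTerms.pairRange_eval₄_xxww_mem (hday : DayTerms ops m d)
    (hℛ : IsLowerSet ℛ) (hℛid : SetRel.id ∈ ℛ) (hℛsw : ∀ R ∈ ℛ, Prod.swap ⁻¹' R ∈ ℛ)
    (hℛc : seCompatible ops ℛ) (h₁ : IsSuperEq ℐ₁) (h₁c : seCompatible ops ℐ₁)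
    (h₂ : IsSuperEq ℐ₂) (h₂c : seCompatible ops ℐ₂) (hle : ℛ ∩ ℐ₁ ⊆ ℐ₂)
    (hxy : pairRange x y ∈ ℛ) (hyz : pairRange y z ∈ ℐ₁ ∩ ℐ₂) (hzw : pairRange z w ∈ ℛ)
    (hxw : pairRange x w ∈ ℐ₁) {k : ℕ} (hk : k ≤ d) :
    pairRange x ((m k).eval₄ ops x x w w) ∈ ℐ₂ := by
  obtain ⟨habba, hfirst, -, heven, hodd⟩ := hday
  have hcollapse (i : ℕ) (hi : i ≤ d) :
      pairRange ((m i).eval₄ ops x x w w) ((m i).eval₄ ops x y z w) ∈ ℐ₂ :=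
    hle ⟨pairRange_eval₄_collapse_mem hℛ hℛid hℛsw hℛc (m i) hxy hzw,
      pairRange_eval₄_collapse_mem_of_eval_abba h₁ h₁c (habba i hi) hyz.1 hxw⟩
  induction k with
  | zero =>
    have hx : (m 0).eval₄ ops x x w w = x := funext fun _ => hfirst _ _ _ _
    rw [hx]
    exact h₂.pairRange_self_mem x
  | succ k ih =>
    have hkd : k < d := hk
    rcases Nat.even_or_odd k with hk_even | hk_odd
    · have hxxww : (m (k + 1)).eval₄ ops x x w w = (m k).eval₄ ops x x w w :=
        funext fun _ => (heven k hkd hk_even _ _).symm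
      rw [hxxww]
      exact ih hkd.le
    · have hstep := pairRange_eval₄_mem_of_eval_abbc_eq (x := x) (w := w) h₂ h₂c
        (hodd k hkd hk_odd) hyz.2
      exact h₂.pairRange_trans_mem (ih hkd.le) <| h₂.pairRange_trans_mem (hcollapse k hkd.le) <|
        h₂.pairRange_trans_mem hstep (h₂.pairRange_symm_mem (hcollapse (k + 1) hk))

lemma DayTerms.pairRange_mem_of_shifting (hday : DayTerms ops m d)
    (hℛ : IsLowerSet ℛ) (hℛid : SetRel.id ∈ ℛ) (hℛsw : ∀ R ∈ ℛ, Prod.swap ⁻¹' R ∈ ℛ)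
    (hℛc : seCompatible ops ℛ) (h₁ : IsSuperEq ℐ₁) (h₁c : seCompatible ops ℐ₁)
    (h₂ : IsSuperEq ℐ₂) (h₂c : seCompatible ops ℐ₂) (hle : ℛ ∩ ℐ₁ ⊆ ℐ₂)
    (hxy : pairRange x y ∈ ℛ) (hyz : pairRange y z ∈ ℐ₁ ∩ ℐ₂) (hzw : pairRange z w ∈ ℛ)
    (hxw : pairRange x w ∈ ℐ₁) :
    pairRange x w ∈ ℐ₂ := by
  have hw : (m d).eval₄ ops x x w w = w := funext fun _ => hday.2.2.1 _ _ _ _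
  simpa only [hw] using hday.pairRange_eval₄_xxww_mem hℛ hℛid hℛsw hℛc h₁ h₁c h₂ h₂c hle
    hxy hyz hzw hxw le_rfl

end Shifting

lemma pairRange_subtype_val (T : Set (α × α)) :
    pairRange (fun p : T => p.1.1) (fun p => p.1.2) = T :=
  Subtype.range_coe

lemma exists_pairRange_of_subset_comp {T R S U : Set (α × α)}
    (h : T ⊆ SetRel.comp R (SetRel.comp S U)) :
    ∃ y z : T → α, pairRange (fun p => p.1.1) y ⊆ R ∧ pairRange y z ⊆ S ∧
      pairRange z (fun p => p.1.2) ⊆ U := by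
  choose y hy z hz hz' using fun p : T => h p.2
  exact ⟨y, z, range_subset_iff.2 hy, range_subset_iff.2 hz, range_subset_iff.2 hz'⟩

theorem stmt14_general (ops : ∀ i, (Fin (ar i) → A) → A) (m : ℕ → Term ι ar 4) (d : ℕ)
    (hday : DayTerms ops m d)
    (ℛ : Set (Set (A × A))) (hR : IsIdeal ℛ) (hRrefl : SetRel.id ∈ ℛ)
    (hRsymm : ∀ R ∈ ℛ, Prod.swap ⁻¹' R ∈ ℛ) (hRcomp : seCompatible ops ℛ)
    (ℐ₁ ℐ₂ : Set (Set (A × A)))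
    (h1 : IsSuperEq ℐ₁) (h1c : seCompatible ops ℐ₁)
    (h2 : IsSuperEq ℐ₂) (h2c : seCompatible ops ℐ₂)
    (hle : ℛ ∩ ℐ₁ ⊆ ℐ₂) :
    idealComp ℛ (idealComp (ℐ₁ ∩ ℐ₂) ℛ) ∩ ℐ₁ ⊆ ℐ₂ := by
  rintro T ⟨⟨R₁, hR₁, S', ⟨S, hS, R₂, hR₂, hS'⟩, hTS'⟩, hT⟩
  obtain ⟨y, z, hxy, hyz, hzw⟩ :=
    exists_pairRange_of_subset_comp (hTS'.trans (SetRel.comp_subset_comp_right hS'))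
  rw [← pairRange_subtype_val T] at hT ⊢
  exact hday.pairRange_mem_of_shifting hR.isLowerSet hRrefl hRsymm hRcomp h1 h1c h2 h2c hle
    (hR.isLowerSet hxy hR₁) ⟨h1.isLowerSet hyz hS.1, h2.isLowerSet hyz hS.2⟩
    (hR.isLowerSet hzw hR₂) hT

theorem stmt14 (ops : ∀ i, (Fin (ar i) → A) → A) (m : ℕ → Term ι ar 4) (d : ℕ)
    (hday : DayTerms ops m d)
    (ℛ : Set (Set (A × A))) (hR : IsIdeal ℛ) (hRrefl : SetRel.id ∈ ℛ)
    (hRsymm : ∀ R ∈ ℛ, Prod.swap ⁻¹' R ∈ ℛ) (hRcomp : seCompatible ops ℛ)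
    (ℐ₁ ℐ₂ : Set (Set (A × A)))
    (h1 : IsSuperEq ℐ₁) (h1c : seCompatible ops ℐ₁)
    (h2 : IsSuperEq ℐ₂) (h2c : seCompatible ops ℐ₂)
    (hle : ℛ ∩ ℐ₁ ⊆ ℐ₂) (hle2 : ℐ₂ ⊆ ℐ₁) :
    idealComp ℛ (idealComp (ℐ₁ ∩ ℐ₂) ℛ) ∩ ℐ₁ ⊆ ℐ₂ :=
  stmt14_general ops m d hday ℛ hR hRrefl hRsymm hRcomp ℐ₁ ℐ₂ h1 h1c h2 h2c hle
end

section
/- Two superuniformities ℰ and ℰ' on a set S permute (ℰ ∘ ℰ' = ℰ' ∘ ℰ) if and only if their join in the lattice of superuniformities equals ℰ ∘ ℰ'. -/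
open Filter Set

variable {α : Type*}

/-- Composition of filters of relations: the filter generated by compositions
of members. -/
def fComp (F G : Filter (α × α)) : Filter (α × α) :=
  F.lift fun U => G.lift' fun V => SetRel.comp U V

/-- An ideal in the lattice of filters of relations (filters carry the
reverse-inclusion order, which is Mathlib's order on `Filter`): nonempty,
downward closed, and closed under finite joins. -/
def IsFilIdeal (ℰ : Set (Filter (α × α))) : Prop :=
  ℰ.Nonempty ∧ (∀ F ∈ ℰ, ∀ G ≤ F, G ∈ ℰ) ∧ (∀ F ∈ ℰ, ∀ G ∈ ℰ, F ⊔ G ∈ ℰ)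

/-- A superuniformity: an ideal of filters of relations containing the
principal filter on the diagonal, closed under opposites of filters, and
closed under composition of filters. -/
def IsSuperUnif (ℰ : Set (Filter (α × α))) : Prop :=
  IsFilIdeal ℰ ∧ 𝓟 SetRel.id ∈ ℰ ∧ (∀ F ∈ ℰ, Filter.map Prod.swap F ∈ ℰ) ∧
    (∀ F ∈ ℰ, ∀ G ∈ ℰ, fComp F G ∈ ℰ)

/-- Composition of ideals of filters: the ideal generated by the filter
compositions of members (a directed family, hence the downward closure). -/
def filIdealComp (ℰ ℰ' : Set (Filter (α × α))) : Set (Filter (α × α)) :=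
  {H | ∃ F ∈ ℰ, ∃ G ∈ ℰ', H ≤ fComp F G}

/-- Composition of a nonempty list of filters of relations. -/
def filListComp : List (Filter (α × α)) → Filter (α × α)
  | [] => 𝓟 SetRel.id
  | [F] => F
  | F :: G :: l => fComp F (filListComp (G :: l))

/-- The set of finite (nonempty) compositions of filters from `X`. -/
def filComps (X : Set (Filter (α × α))) : Set (Filter (α × α)) :=
  {H | ∃ l : List (Filter (α × α)), l ≠ [] ∧ (∀ F ∈ l, F ∈ X) ∧ H = filListComp l}

/-- The ideal of filters generated by a set `G` of filters: everything below a
finite join of members. -/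
def filIdealGen (G : Set (Filter (α × α))) : Set (Filter (α × α)) :=
  {H | ∃ s : Finset (Filter (α × α)), ↑s ⊆ G ∧ H ≤ s.sup id}

/-- The join of two superuniformities: the ideal generated by all finite
compositions of filters from their union. -/
def suJoin (ℰ ℰ' : Set (Filter (α × α))) : Set (Filter (α × α)) :=
  filIdealGen (filComps (ℰ ∪ ℰ'))

/-- The join of a family of superuniformities. -/
def suSup (S : Set (Set (Filter (α × α)))) : Set (Filter (α × α)) :=
  filIdealGen (filComps (⋃₀ S))

/-! If `ℰ ∘ ℰ'` and `ℰ' ∘ ℰ` agree, then `ℰ ∘ ℰ'` is closed under composition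
(`F₁G₁F₂G₂ ≤ F₁F₃G₃G₂` after rewriting `G₁F₂ ≤ F₃G₃`), so it is an ideal containing every
finite composition of members of `ℰ ∪ ℰ'`, and therefore contains the join; the reverse
inclusion always holds. Conversely, if the join is `ℰ ∘ ℰ'`, then `ℰ' ∘ ℰ ⊆ ℰ ∘ ℰ'`, and
taking opposites, which exchanges `ℰ ∘ ℰ'` with `ℰ' ∘ ℰ`, gives the other inclusion. -/

lemma mem_fComp {F G : Filter (α × α)} {s : Set (α × α)} :
    s ∈ fComp F G ↔ ∃ U ∈ F, ∃ V ∈ G, SetRel.comp U V ⊆ s := by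
  have hmono : Monotone fun U : Set (α × α) => G.lift' fun V => SetRel.comp U V :=
    fun _ _ hU => lift'_mono' fun _ _ => SetRel.comp_subset_comp_left hU
  rw [fComp, mem_lift_sets hmono]
  simp only [mem_lift'_sets fun _ _ hV => SetRel.comp_subset_comp_right hV]

@[gcongr]
lemma fComp_mono {F F' G G' : Filter (α × α)} (hF : F ≤ F') (hG : G ≤ G') :
    fComp F G ≤ fComp F' G' := fun _ hs => by
  obtain ⟨U, hU, V, hV, hUV⟩ := mem_fComp.1 hs
  exact mem_fComp.2 ⟨U, hF hU, V, hG hV, hUV⟩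

lemma fComp_assoc (F G H : Filter (α × α)) :
    fComp (fComp F G) H = fComp F (fComp G H) := by
  ext s
  simp only [mem_fComp]
  constructor
  · rintro ⟨W, ⟨U, hU, V, hV, hUV⟩, X, hX, hWX⟩
    refine ⟨U, hU, SetRel.comp V X, ⟨V, hV, X, hX, subset_rfl⟩, ?_⟩
    rw [← SetRel.comp_assoc]
    exact (SetRel.comp_subset_comp_left hUV).trans hWX
  · rintro ⟨U, hU, W, ⟨V, hV, X, hX, hVX⟩, hUW⟩
    refine ⟨SetRel.comp U V, ⟨U, hU, V, hV, subset_rfl⟩, X, hX, ?_⟩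
    rw [SetRel.comp_assoc]
    exact (SetRel.comp_subset_comp_right hVX).trans hUW

lemma fComp_principal_id (F : Filter (α × α)) : fComp F (𝓟 SetRel.id) = F := by
  ext s
  refine ⟨fun hs => ?_, fun hs => mem_fComp.2 ⟨s, hs, _, mem_principal_self _, by simp⟩⟩
  obtain ⟨U, hU, V, hV, hUV⟩ := mem_fComp.1 hs
  exact mem_of_superset hU <| by
    simpa using (SetRel.comp_subset_comp_right (mem_principal.1 hV)).trans hUV

lemma principal_id_fComp (F : Filter (α × α)) : fComp (𝓟 SetRel.id) F = F := by
  ext s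
  refine ⟨fun hs => ?_, fun hs => mem_fComp.2 ⟨_, mem_principal_self _, s, hs, by simp⟩⟩
  obtain ⟨U, hU, V, hV, hUV⟩ := mem_fComp.1 hs
  exact mem_of_superset hV <| by
    simpa using (SetRel.comp_subset_comp_left (mem_principal.1 hU)).trans hUV

lemma map_swap_fComp (F G : Filter (α × α)) :
    map Prod.swap (fComp F G) = fComp (map Prod.swap G) (map Prod.swap F) := by
  ext s
  -- `s ∈ map Prod.swap F` unfolds to `SetRel.inv s ∈ F`, and inversion reverses composition
  simp only [mem_map, mem_fComp]
  constructor
  · rintro ⟨U, hU, V, hV, hUV⟩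
    refine ⟨SetRel.inv V, hV, SetRel.inv U, hU, ?_⟩
    rw [← SetRel.inv_comp]
    exact preimage_mono hUV
  · rintro ⟨V, hV, U, hU, hVU⟩
    refine ⟨SetRel.inv U, hU, SetRel.inv V, hV, ?_⟩
    rw [← SetRel.inv_comp]
    exact preimage_mono hVU

lemma filListComp_cons_mem {I : Set (Filter (α × α))}
    (hI : ∀ F ∈ I, ∀ G ∈ I, fComp F G ∈ I) :
    ∀ {F : Filter (α × α)} {l : List (Filter (α × α))},
      F ∈ I → (∀ G ∈ l, G ∈ I) → filListComp (F :: l) ∈ I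
  | _, [], hF, _ => hF
  | _, G :: _, hF, hl =>
    hI _ hF _ (filListComp_cons_mem hI (hl G List.mem_cons_self)
      fun _ hK => hl _ (List.mem_cons_of_mem G hK))

lemma filComps_subset {X I : Set (Filter (α × α))} (hXI : X ⊆ I)
    (hI : ∀ F ∈ I, ∀ G ∈ I, fComp F G ∈ I) : filComps X ⊆ I := by
  rintro _ ⟨l, hl, hlX, rfl⟩
  obtain ⟨F, l, rfl⟩ := List.exists_cons_of_ne_nil hl
  exact filListComp_cons_mem hI (hXI (hlX F List.mem_cons_self))
    fun G hG => hXI (hlX G (List.mem_cons_of_mem F hG))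

lemma mem_filIdealGen_of_le {G : Set (Filter (α × α))} {H K : Filter (α × α)}
    (hK : K ∈ G) (hHK : H ≤ K) : H ∈ filIdealGen G :=
  ⟨{K}, by simpa using hK, by simpa using hHK⟩

lemma IsFilIdeal.filIdealGen_subset {G I : Set (Filter (α × α))} (hI : IsFilIdeal I)
    (hGI : G ⊆ I) : filIdealGen G ⊆ I := by
  classical
  rintro H ⟨s, hsG, hHs⟩
  obtain ⟨F, hF⟩ := hI.1
  refine hI.2.1 _ ?_ H hHs
  clear H hHs
  induction s using Finset.induction_on with
  | empty => exact hI.2.1 F hF ⊥ bot_le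
  | insert K s _ ih =>
    rw [Finset.coe_insert, insert_subset_iff] at hsG
    rw [Finset.sup_insert]
    exact hI.2.2 K (hGI hsG.1) _ (ih hsG.2)

lemma IsFilIdeal.filIdealComp {ℰ ℰ' : Set (Filter (α × α))} (h : IsFilIdeal ℰ)
    (h' : IsFilIdeal ℰ') : IsFilIdeal (filIdealComp ℰ ℰ') := by
  obtain ⟨F, hF⟩ := h.1
  obtain ⟨G, hG⟩ := h'.1
  refine ⟨⟨fComp F G, F, hF, G, hG, le_rfl⟩, ?_, ?_⟩
  · rintro H ⟨F, hF, G, hG, hH⟩ K hK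
    exact ⟨F, hF, G, hG, hK.trans hH⟩
  · rintro H₁ ⟨F₁, hF₁, G₁, hG₁, hH₁⟩ H₂ ⟨F₂, hF₂, G₂, hG₂, hH₂⟩
    refine ⟨F₁ ⊔ F₂, h.2.2 _ hF₁ _ hF₂, G₁ ⊔ G₂, h'.2.2 _ hG₁ _ hG₂, sup_le ?_ ?_⟩
    · exact hH₁.trans (fComp_mono le_sup_left le_sup_left)
    · exact hH₂.trans (fComp_mono le_sup_right le_sup_right)

lemma subset_filIdealComp_left {ℰ ℰ' : Set (Filter (α × α))} (h' : 𝓟 SetRel.id ∈ ℰ') :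
    ℰ ⊆ filIdealComp ℰ ℰ' :=
  fun F hF => ⟨F, hF, _, h', (fComp_principal_id F).ge⟩

lemma subset_filIdealComp_right {ℰ ℰ' : Set (Filter (α × α))} (h : 𝓟 SetRel.id ∈ ℰ) :
    ℰ' ⊆ filIdealComp ℰ ℰ' :=
  fun G hG => ⟨_, h, G, hG, (principal_id_fComp G).ge⟩

lemma fComp_mem_filIdealComp_of_comm {ℰ ℰ' : Set (Filter (α × α))}
    (hℰ : ∀ F ∈ ℰ, ∀ G ∈ ℰ, fComp F G ∈ ℰ) (hℰ' : ∀ F ∈ ℰ', ∀ G ∈ ℰ', fComp F G ∈ ℰ')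
    (hcomm : filIdealComp ℰ ℰ' = filIdealComp ℰ' ℰ) {H₁ H₂ : Filter (α × α)}
    (hH₁ : H₁ ∈ filIdealComp ℰ ℰ') (hH₂ : H₂ ∈ filIdealComp ℰ ℰ') :
    fComp H₁ H₂ ∈ filIdealComp ℰ ℰ' := by
  obtain ⟨F₁, hF₁, G₁, hG₁, hH₁⟩ := hH₁
  obtain ⟨F₂, hF₂, G₂, hG₂, hH₂⟩ := hH₂
  obtain ⟨F₃, hF₃, G₃, hG₃, hGF⟩ : fComp G₁ F₂ ∈ filIdealComp ℰ ℰ' :=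
    hcomm ▸ ⟨G₁, hG₁, F₂, hF₂, le_rfl⟩
  refine ⟨fComp F₁ F₃, hℰ _ hF₁ _ hF₃, fComp G₃ G₂, hℰ' _ hG₃ _ hG₂, ?_⟩
  calc fComp H₁ H₂ ≤ fComp (fComp F₁ G₁) (fComp F₂ G₂) := fComp_mono hH₁ hH₂
    _ = fComp F₁ (fComp (fComp G₁ F₂) G₂) := by simp only [fComp_assoc]
    _ ≤ fComp F₁ (fComp (fComp F₃ G₃) G₂) := by gcongr
    _ = fComp (fComp F₁ F₃) (fComp G₃ G₂) := by simp only [fComp_assoc]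

lemma filIdealComp_subset_suJoin (ℰ ℰ' : Set (Filter (α × α))) :
    filIdealComp ℰ ℰ' ⊆ suJoin ℰ ℰ' := by
  rintro H ⟨F, hF, G, hG, hH⟩
  refine mem_filIdealGen_of_le ⟨[F, G], by simp, ?_, rfl⟩ hH
  simp only [List.mem_cons, List.not_mem_nil, or_false, forall_eq_or_imp, forall_eq]
  exact ⟨Or.inl hF, Or.inr hG⟩

lemma suJoin_comm (ℰ ℰ' : Set (Filter (α × α))) : suJoin ℰ ℰ' = suJoin ℰ' ℰ := by
  rw [suJoin, suJoin, union_comm]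

lemma map_swap_mem_filIdealComp {ℰ ℰ' : Set (Filter (α × α))}
    (hℰ : ∀ F ∈ ℰ, map Prod.swap F ∈ ℰ) (hℰ' : ∀ F ∈ ℰ', map Prod.swap F ∈ ℰ')
    {H : Filter (α × α)} (hH : H ∈ filIdealComp ℰ ℰ') : map Prod.swap H ∈ filIdealComp ℰ' ℰ := by
  obtain ⟨F, hF, G, hG, hH⟩ := hH
  exact ⟨_, hℰ' G hG, _, hℰ F hF, (map_mono hH).trans (map_swap_fComp F G).le⟩

lemma filIdealComp_comm_of_subset {ℰ ℰ' : Set (Filter (α × α))}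
    (hℰ : ∀ F ∈ ℰ, map Prod.swap F ∈ ℰ) (hℰ' : ∀ F ∈ ℰ', map Prod.swap F ∈ ℰ')
    (hsub : filIdealComp ℰ' ℰ ⊆ filIdealComp ℰ ℰ') :
    filIdealComp ℰ ℰ' = filIdealComp ℰ' ℰ := by
  refine Subset.antisymm (fun H hH => ?_) hsub
  have := map_swap_mem_filIdealComp hℰ hℰ' (hsub (map_swap_mem_filIdealComp hℰ hℰ' hH))
  rwa [map_map, Prod.swap_swap_eq, map_id] at this

theorem stmt16 (ℰ ℰ' : Set (Filter (α × α)))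
    (h : IsSuperUnif ℰ) (h' : IsSuperUnif ℰ') :
    filIdealComp ℰ ℰ' = filIdealComp ℰ' ℰ ↔ suJoin ℰ ℰ' = filIdealComp ℰ ℰ' := by
  obtain ⟨hideal, hid, hswap, hcomp⟩ := h
  obtain ⟨hideal', hid', hswap', hcomp'⟩ := h'
  constructor
  · intro hcomm
    refine Subset.antisymm ?_ (filIdealComp_subset_suJoin ℰ ℰ')
    refine (hideal.filIdealComp hideal').filIdealGen_subset (filComps_subset ?_ ?_)
    · exact union_subset (subset_filIdealComp_left hid') (subset_filIdealComp_right hid)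
    · exact fun _ hH₁ _ hH₂ => fComp_mem_filIdealComp_of_comm hcomp hcomp' hcomm hH₁ hH₂
  · intro hjoin
    refine filIdealComp_comm_of_subset hswap hswap' ?_
    rw [← hjoin, suJoin_comm]
    exact filIdealComp_subset_suJoin ℰ' ℰ
end
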